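/- Let X be a metric space, F : X → 𝒫(X) an upper semicontinuous multivalued map with compact values, and N ⊆ X compact. If P = (P₁,P₂) and Q = (Q₁,Q₂) are weak index pairs in N with P₁ ⊆ Q₁ and P₂ ⊆ Q₂, then (P₁ ∪ Q₂, Q₂) is a weak index pair in N. -/
import Mathlib


open Set Topology

/-- The image of a set under a multivalued map. -/
def MVImage {Y : Type*} (F : Y → Set Y) (A : Set Y) : Set Y :=
  ⋃ y ∈ A, F y

/-- Upper semicontinuity of a multivalued map: the large counter image of every
closed set is closed. -/
def IsUSC {Y : Type*} [TopologicalSpace Y] (F : Y → Set Y) : Prop :=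
  ∀ B : Set Y, IsClosed B → IsClosed {y | (F y ∩ B).Nonempty}

/-- The invariant part of `N` with respect to `F`: points admitting a full
solution (in `N`) through them. -/
def InvPart {Y : Type*} (F : Y → Set Y) (N : Set Y) : Set Y :=
  {y | ∃ σ : ℤ → Y, (∀ n : ℤ, σ n ∈ N) ∧ σ 0 = y ∧ ∀ n : ℤ, σ (n + 1) ∈ F (σ n)}

/-- The `F`-boundary of a set `A`: `cl A ∩ cl (F(A) \ A)`. -/
def FBoundary {Y : Type*} [TopologicalSpace Y] (F : Y → Set Y) (A : Set Y) : Set Y :=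
  closure A ∩ closure (MVImage F A \ A)

/-- `(P₁, P₂)` is a weak index pair for `F` in `N`. -/
structure IsWeakIndexPair {Y : Type*} [TopologicalSpace Y] (F : Y → Set Y)
    (N P₁ P₂ : Set Y) : Prop where
  compact₁ : IsCompact P₁
  compact₂ : IsCompact P₂
  subset₂₁ : P₂ ⊆ P₁
  subset₁N : P₁ ⊆ N
  mapsInto₁ : MVImage F P₁ ∩ N ⊆ P₁
  mapsInto₂ : MVImage F P₂ ∩ N ⊆ P₂
  fBoundary_subset : FBoundary F P₁ ⊆ P₂
  inv_subset : InvPart F N ⊆ interior (P₁ \ P₂)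
  diff_subset : P₁ \ P₂ ⊆ interior N

lemma mvImage_union {Y : Type*} (F : Y → Set Y) (A B : Set Y) :
    MVImage F (A ∪ B) = MVImage F A ∪ MVImage F B := by
  exact biUnion_union A B F

lemma mvImage_mono {Y : Type*} (F : Y → Set Y) {A B : Set Y} (h : A ⊆ B) :
    MVImage F A ⊆ MVImage F B :=
  biUnion_subset_biUnion_left h

/-- If `P ⊆ Q` are weak index pairs in `N`, then `(P₁ ∪ Q₂, Q₂)` is a weak
index pair in `N`. -/
theorem weakIndexPair_union_snd {X : Type*} [MetricSpace X]
    (F : X → Set X) (hF : IsUSC F) (hFc : ∀ x, IsCompact (F x))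
    (N : Set X) (hN : IsCompact N)
    (P₁ P₂ Q₁ Q₂ : Set X)
    (hP : IsWeakIndexPair F N P₁ P₂) (hQ : IsWeakIndexPair F N Q₁ Q₂)
    (h₁ : P₁ ⊆ Q₁) (h₂ : P₂ ⊆ Q₂) :
    IsWeakIndexPair F N (P₁ ∪ Q₂) Q₂ := by
  have hdiff : (P₁ ∪ Q₂) \ Q₂ = P₁ \ Q₂ := union_diff_right
  have hPQ2 : P₁ \ Q₂ ⊆ P₁ \ P₂ := diff_subset_diff_right h₂
  constructor
  · exact hP.compact₁.union hQ.compact₂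
  · exact hQ.compact₂
  · exact subset_union_right
  · exact union_subset hP.subset₁N (hQ.subset₂₁.trans hQ.subset₁N)
  · rw [mvImage_union, union_inter_distrib_right]
    exact union_subset_union hP.mapsInto₁ hQ.mapsInto₂
  · exact hQ.mapsInto₂
  · -- F-boundary condition
    intro x hx
    obtain ⟨hx1, hx2⟩ := hx
    rw [(hP.compact₁.union hQ.compact₂).isClosed.closure_eq] at hx1
    have hsub : MVImage F (P₁ ∪ Q₂) \ (P₁ ∪ Q₂) ⊆
        (MVImage F P₁ \ P₁) ∪ (MVImage F Q₂ \ Q₂) := by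
      rw [mvImage_union]
      rintro y ⟨hy1 | hy1, hy2⟩
      · exact Or.inl ⟨hy1, fun h => hy2 (Or.inl h)⟩
      · exact Or.inr ⟨hy1, fun h => hy2 (Or.inr h)⟩
    have hx2' : x ∈ closure (MVImage F P₁ \ P₁) ∪ closure (MVImage F Q₂ \ Q₂) := by
      have := closure_mono hsub hx2
      rwa [closure_union] at this
    rcases hx1 with hx1 | hx1
    · -- x ∈ P₁
      rcases hx2' with h | h
      · exact h₂ (hP.fBoundary_subset ⟨subset_closure hx1, h⟩)
      · -- x ∈ closure (F(Q₂) \ Q₂); but F(Q₂)\Q₂ ⊆ Nᶜ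
        have hNc : MVImage F Q₂ \ Q₂ ⊆ Nᶜ := by
          intro y hy hyN
          exact hy.2 (hQ.mapsInto₂ ⟨hy.1, hyN⟩)
        have hxint : x ∉ interior N := by
          have := closure_mono hNc h
          rw [closure_compl] at this
          exact this
        by_contra hxQ
        have hxP2 : x ∉ P₂ := fun h => hxQ (h₂ h)
        exact hxint (hP.diff_subset ⟨hx1, hxP2⟩)
    · exact hx1
  · -- invariant part
    intro x hx
    have h1 := hP.inv_subset hx
    have h2 := hQ.inv_subset hx
    have : x ∈ interior ((P₁ \ P₂) ∩ (Q₁ \ Q₂)) := by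
      rw [interior_inter]; exact ⟨h1, h2⟩
    refine interior_mono ?_ this
    rw [hdiff]
    rintro y ⟨⟨hy1, _⟩, ⟨_, hy2⟩⟩
    exact ⟨hy1, hy2⟩
  · rw [hdiff]
    exact hPQ2.trans hP.diff_subset
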